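/- Let A be a finite set of strings and W a common subsequence of A. Then W is not a maximal common subsequence of A if and only if there exists k with 0 ≤ k ≤ |W| and a character c such that c occurs in Middle(A_l, W, k) for every string A_l in A; in that case the string W(0,k] ⊕ c ⊕ W(k,|W|] is also a common subsequence of A. -/

import Mathlib

open List

/-- Length of the shortest prefix of `A` containing `W` as a subsequence. -/
noncomputable def minPrefixLen {α : Type*} (A W : List α) : ℕ :=
  sInf {n | W <+ A.take n}

/-- Length of the shortest suffix of `A` containing `W` as a subsequence. -/
noncomputable def minSuffixLen {α : Type*} (A W : List α) : ℕ :=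
  sInf {n | W <+ A.drop (A.length - n)}

/-- `Middle A W k`: what remains of `A` after deleting the shortest prefix containing
`W.take k` as a subsequence and the shortest suffix containing `W.drop k`. -/
noncomputable def Middle {α : Type*} (A W : List α) (k : ℕ) : List α :=
  (A.take (A.length - minSuffixLen A (W.drop k))).drop (minPrefixLen A (W.take k))

/-- `W` is a common subsequence of all strings in `𝒜`. -/
def IsCommonSubseq {α : Type*} (𝒜 : Finset (List α)) (W : List α) : Prop :=
  ∀ A ∈ 𝒜, W <+ A

/-- `W` is a maximal common subsequence of `𝒜`: it is a common subsequence and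
inserting any single character at any position never yields a common subsequence. -/
def IsMCS {α : Type*} (𝒜 : Finset (List α)) (W : List α) : Prop :=
  IsCommonSubseq 𝒜 W ∧
    ∀ (c : α) (k : ℕ), k ≤ W.length →
      ¬ IsCommonSubseq 𝒜 (W.take k ++ c :: W.drop k)

/-!
For `W <+ A`, the word `W.take k ++ c :: W.drop k` is a subsequence of `A` exactly when `c`
occurs in `Middle A W k`: embedding `W.take k` as early as possible and `W.drop k` as late as
possible leaves the largest gap between them, so any embedding of `W.take k ++ c :: W.drop k`
must place `c` inside that gap.
-/

section Middle

variable {α : Type*}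

lemma sublist_take_minPrefixLen {A W : List α} (h : W <+ A) :
    W <+ A.take (minPrefixLen A W) :=
  Nat.sInf_mem (⟨A.length, by simpa using h⟩ : Set.Nonempty {n | W <+ A.take n})

lemma sublist_drop_minSuffixLen {A W : List α} (h : W <+ A) :
    W <+ A.drop (A.length - minSuffixLen A W) :=
  Nat.sInf_mem (⟨A.length, by simpa using h⟩ : Set.Nonempty {n | W <+ A.drop (A.length - n)})

lemma minPrefixLen_le {A W : List α} {n : ℕ} (h : W <+ A.take n) : minPrefixLen A W ≤ n :=
  Nat.sInf_le h

lemma minSuffixLen_le {A W : List α} {n : ℕ} (h : W <+ A.drop (A.length - n)) :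
    minSuffixLen A W ≤ n :=
  Nat.sInf_le h

lemma drop_take_sublist_drop_take (A : List α) {p p' m m' : ℕ} (hp : p ≤ p') (hm : m' ≤ m) :
    (A.take m').drop p' <+ (A.take m).drop p :=
  (drop_sublist_drop_left _ hp).trans ((take_sublist_take_left hm).drop p)

lemma mem_middle_of_sublist {A W : List α} {k : ℕ} {c : α}
    (h : W.take k ++ c :: W.drop k <+ A) : c ∈ Middle A W k := by
  obtain ⟨r, r₃, rfl, hr, h₃⟩ := append_sublist_iff.1 (by simpa using h :
    (W.take k ++ [c]) ++ W.drop k <+ A)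
  obtain ⟨r₁, r₂, rfl, h₁, h₂⟩ := append_sublist_iff.1 hr
  have hp : minPrefixLen (r₁ ++ r₂ ++ r₃) (W.take k) ≤ r₁.length :=
    minPrefixLen_le (by simpa using h₁)
  have hs : minSuffixLen (r₁ ++ r₂ ++ r₃) (W.drop k) ≤ r₃.length :=
    minSuffixLen_le (by rwa [length_append, Nat.add_sub_cancel, drop_left])
  have hgap : ((r₁ ++ r₂ ++ r₃).take (r₁.length + r₂.length)).drop r₁.length = r₂ := by
    rw [take_left' length_append, drop_left]
  have hr₂ : r₂ <+ Middle (r₁ ++ r₂ ++ r₃) W k := by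
    have hlen : r₁.length + r₂.length ≤ (r₁ ++ r₂ ++ r₃).length - r₃.length := by
      simp only [length_append]; omega
    have hmono := drop_take_sublist_drop_take (r₁ ++ r₂ ++ r₃) hp
      (hlen.trans (Nat.sub_le_sub_left hs _))
    rwa [hgap] at hmono
  exact hr₂.subset (singleton_sublist.1 h₂)

lemma append_cons_sublist_of_mem_drop_take {A X Y : List α} {p m : ℕ} {c : α}
    (hX : X <+ A.take p) (hY : Y <+ A.drop m) (hc : c ∈ (A.take m).drop p) :
    X ++ c :: Y <+ A := by
  have hpm : p ≤ m := by
    by_contra! hmp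
    rw [drop_eq_nil_of_le (by grind)] at hc
    exact not_mem_nil hc
  have hsplit : A.take p ++ (A.take m).drop p ++ A.drop m = A := by
    have hprefix : A.take p = (A.take m).take p := by rw [take_take, min_eq_left hpm]
    rw [hprefix, take_append_drop, take_append_drop]
  rw [← hsplit, ← singleton_append, ← append_assoc]
  exact (hX.append (singleton_sublist.2 hc)).append hY

lemma sublist_of_mem_middle {A W : List α} {k : ℕ} {c : α}
    (hWA : W <+ A) (hc : c ∈ Middle A W k) :
    W.take k ++ c :: W.drop k <+ A :=
  append_cons_sublist_of_mem_drop_take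
    (sublist_take_minPrefixLen ((take_sublist k W).trans hWA))
    (sublist_drop_minSuffixLen ((drop_sublist k W).trans hWA)) hc

lemma mem_middle_iff_sublist {A W : List α} (hWA : W <+ A) {k : ℕ} {c : α} :
    c ∈ Middle A W k ↔ W.take k ++ c :: W.drop k <+ A :=
  ⟨sublist_of_mem_middle hWA, mem_middle_of_sublist⟩

end Middle

theorem stmt2 {α : Type*} (𝒜 : Finset (List α)) (W : List α)
    (hW : IsCommonSubseq 𝒜 W) :
    (¬ IsMCS 𝒜 W ↔
      ∃ k : ℕ, k ≤ W.length ∧ ∃ c : α, ∀ A ∈ 𝒜, c ∈ Middle A W k) ∧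
    (∀ (k : ℕ) (c : α), k ≤ W.length → (∀ A ∈ 𝒜, c ∈ Middle A W k) →
      IsCommonSubseq 𝒜 (W.take k ++ c :: W.drop k)) := by
  have hmiddle (k : ℕ) (c : α) :
      (∀ A ∈ 𝒜, c ∈ Middle A W k) ↔ IsCommonSubseq 𝒜 (W.take k ++ c :: W.drop k) :=
    forall₂_congr fun A hA => mem_middle_iff_sublist (hW A hA)
  refine ⟨?_, fun k c _ hc => (hmiddle k c).1 hc⟩
  simp only [IsMCS, hW, true_and, hmiddle]
  push Not
  exact ⟨fun ⟨c, k, hk, h⟩ => ⟨k, hk, c, h⟩, fun ⟨k, hk, c, h⟩ => ⟨c, k, hk, h⟩⟩
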